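/- Let x = (x1, x2) with x1 ⟂ x2 discrete, and y = f(x1) with H(y|x1)=0. Suppose z is a deterministic function of x (H(z|x)=0) that is sufficient for y (I(x;y|z)=0) and minimizes H(z) among all such sufficient deterministic representations. Then I(x2; z) = 0. -/

import Mathlib

open scoped BigOperators

/-- A probability mass function on a finite sample space. -/
structure FinPMF (Ω : Type) [Fintype Ω ] where
  p : Ω → ℝ
  nonneg : ∀ ω, 0 ≤ p ω
  sum_one : ∑ ω, p ω = 1

variable {Ω : Type} [Fintype Ω]

/-- Probability of an event. -/
noncomputable def prob (μ : FinPMF Ω) (E : Set Ω) : ℝ :=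
  ∑ ω, E.indicator μ.p ω

/-- Shannon entropy of a finite discrete random variable. -/
noncomputable def entropy {α : Type} [Fintype α] (μ : FinPMF Ω) (X : Ω → α) : ℝ :=
  -∑ a, prob μ {ω | X ω = a} * Real.log (prob μ {ω | X ω = a})

/-- Conditional Shannon entropy `H(X | Y) = H(X,Y) - H(Y)`. -/
noncomputable def condEntropy {α β : Type} [Fintype α] [Fintype β]
    (μ : FinPMF Ω) (X : Ω → α) (Y : Ω → β) : ℝ :=
  entropy μ (fun ω => (X ω, Y ω)) - entropy μ Y

/-- Mutual information `I(X;Y) = H(X) + H(Y) - H(X,Y)`. -/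
noncomputable def mutualInfo {α β : Type} [Fintype α] [Fintype β]
    (μ : FinPMF Ω) (X : Ω → α) (Y : Ω → β) : ℝ :=
  entropy μ X + entropy μ Y - entropy μ (fun ω => (X ω, Y ω))

/-- Conditional mutual information `I(X;Y|Z) = H(X|Z) - H(X|Y,Z)`. -/
noncomputable def condMutualInfo {α β γ : Type} [Fintype α] [Fintype β] [Fintype γ]
    (μ : FinPMF Ω) (X : Ω → α) (Y : Ω → β) (Z : Ω → γ) : ℝ :=
  condEntropy μ X Z - condEntropy μ X (fun ω => (Y ω, Z ω))


/-!
Sufficiency of `z` for `y = f(x₁)` amounts to `H(y | z) = 0`, since `y` is a function of `x`.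
As `y` is itself a deterministic sufficient representation, minimality gives
`H(z) ≤ H(y) ≤ H(y, z) = H(z)`, hence also `H(z | y) = 0`. So `z` and `y` determine each
other, and `I(x₂; z) = I(x₂; y) ≤ I(x₂; x₁) = 0` by data processing.
-/

section Probability

variable (μ : FinPMF Ω)

theorem prob_nonneg (E : Set Ω) : 0 ≤ prob μ E :=
  Finset.sum_nonneg fun ω _ => Set.indicator_nonneg (fun ω _ => μ.nonneg ω) ω

theorem prob_mono {E F : Set Ω} (h : E ⊆ F) : prob μ E ≤ prob μ F :=
  Finset.sum_le_sum fun ω _ => Set.indicator_le_indicator_of_subset h μ.nonneg ω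

theorem prob_le_one (E : Set Ω) : prob μ E ≤ 1 :=
  μ.sum_one ▸ Finset.sum_le_sum fun ω _ => Set.indicator_le_self' (fun ω _ => μ.nonneg ω) ω

theorem sum_prob_eq_prob_mem {α : Type} [DecidableEq α] (W : Ω → α) (s : Finset α) :
    ∑ a ∈ s, prob μ {ω | W ω = a} = prob μ {ω | W ω ∈ s} := by
  simp only [prob, Set.indicator_apply, Set.mem_ofPred_eq]
  rw [Finset.sum_comm]
  exact Finset.sum_congr rfl fun ω _ => Finset.sum_ite_eq s (W ω) _

theorem sum_prob_eq_one {α : Type} [Fintype α] (W : Ω → α) :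
    ∑ a, prob μ {ω | W ω = a} = 1 := by
  classical
  rw [sum_prob_eq_prob_mem, ← μ.sum_one]
  simp [prob]

theorem sum_prob_fiber {α β : Type} [DecidableEq α] [DecidableEq β] [Fintype α]
    (g : α → β) (W : Ω → α) (b : β) :
    ∑ a with g a = b, prob μ {ω | W ω = a} = prob μ {ω | g (W ω) = b} := by
  rw [sum_prob_eq_prob_mem]
  simp

theorem sum_prob_pair_fst {κ ι : Type} [Fintype κ] (U : Ω → κ) (V : Ω → ι) (v : ι) :
    ∑ k, prob μ {ω | (U ω, V ω) = (k, v)} = prob μ {ω | V ω = v} := by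
  classical
  simp only [prob, Set.indicator_apply, Set.mem_ofPred_eq, Prod.mk.injEq, ite_and]
  rw [Finset.sum_comm]
  simp

end Probability

section Entropy

variable (μ : FinPMF Ω) {α β : Type} [Fintype α] [Fintype β]

theorem entropy_nonneg (W : Ω → α) : 0 ≤ entropy μ W :=
  neg_nonneg.mpr <| Finset.sum_nonpos fun _ _ =>
    Real.mul_log_nonpos (prob_nonneg μ _) (prob_le_one μ _)

theorem entropy_comp_eq (g : α → β) (W : Ω → α) :
    entropy μ (g ∘ W) =
      -∑ a, prob μ {ω | W ω = a} * Real.log (prob μ {ω | g (W ω) = g a}) := by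
  classical
  rw [entropy, ← Finset.sum_fiberwise Finset.univ g]
  congr 1
  refine Finset.sum_congr rfl fun b _ => ?_
  rw [Function.comp_def]
  nth_rw 1 [← sum_prob_fiber μ g W b]
  rw [Finset.sum_mul]
  refine Finset.sum_congr rfl fun a ha => ?_
  rw [(Finset.mem_filter.mp ha).2]

theorem entropy_comp_le (g : α → β) (W : Ω → α) : entropy μ (g ∘ W) ≤ entropy μ W := by
  rw [entropy_comp_eq, entropy, neg_le_neg_iff]
  refine Finset.sum_le_sum fun a _ => ?_
  rcases (prob_nonneg μ {ω | W ω = a}).eq_or_lt with h | h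
  · simp [← h]
  · refine mul_le_mul_of_nonneg_left (Real.log_le_log h ?_) h.le
    exact prob_mono μ fun ω (hω : W ω = a) => congrArg g hω

theorem entropy_le_of_comp {V : Ω → β} {W : Ω → α} (g : α → β) (hV : V = g ∘ W) :
    entropy μ V ≤ entropy μ W :=
  hV ▸ entropy_comp_le μ g W

theorem entropy_eq_of_comp {V : Ω → β} {W : Ω → α} (g : α → β) (h : β → α)
    (hV : V = g ∘ W) (hW : W = h ∘ V) : entropy μ V = entropy μ W :=
  (entropy_le_of_comp μ g hV).antisymm (entropy_le_of_comp μ h hW)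

theorem entropy_pair_comm (U : Ω → α) (V : Ω → β) :
    entropy μ (fun ω => (U ω, V ω)) = entropy μ (fun ω => (V ω, U ω)) :=
  entropy_eq_of_comp μ Prod.swap Prod.swap rfl rfl

theorem condEntropy_nonneg (U : Ω → α) (V : Ω → β) : 0 ≤ condEntropy μ U V :=
  sub_nonneg.mpr (entropy_le_of_comp μ Prod.snd rfl)

theorem condEntropy_comp_self (g : α → β) (W : Ω → α) : condEntropy μ (g ∘ W) W = 0 :=
  sub_eq_zero.mpr (entropy_eq_of_comp μ (fun a => (g a, a)) Prod.snd rfl rfl)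

end Entropy

theorem sub_le_mul_log_div {p q : ℝ} (hp : 0 ≤ p) (hq : 0 ≤ q) (hpq : 0 < p → 0 < q) :
    p - q ≤ p * Real.log (p / q) := by
  rcases hp.eq_or_lt with rfl | hp
  · simpa using hq
  have h := mul_le_mul_of_nonneg_left
    (Real.one_sub_inv_le_log_of_pos (div_pos hp (hpq hp))) hp.le
  rwa [inv_div, mul_sub, mul_one, mul_div_cancel₀ _ hp.ne'] at h

section ConditionalMutualInformation

variable (μ : FinPMF Ω) {α β γ : Type} [Fintype α] [Fintype β] [Fintype γ]

theorem sum_prob_mul_prob_div_prob (X : Ω → α) (Y : Ω → β) (Z : Ω → γ) :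
    ∑ t : α × β × γ, prob μ {ω | (X ω, Z ω) = (t.1, t.2.2)} *
      prob μ {ω | (Y ω, Z ω) = t.2} / prob μ {ω | Z ω = t.2.2} = 1 := by
  simp only [Fintype.sum_prod_type]
  rw [Finset.sum_comm, Finset.sum_congr rfl fun _ _ => Finset.sum_comm, Finset.sum_comm]
  simp only [← Finset.sum_div, ← Finset.sum_mul, ← Finset.mul_sum, sum_prob_pair_fst,
    mul_self_div_self, sum_prob_eq_one]

theorem condMutualInfo_eq_sum (X : Ω → α) (Y : Ω → β) (Z : Ω → γ) :
    condMutualInfo μ X Y Z = ∑ t : α × β × γ, prob μ {ω | (X ω, Y ω, Z ω) = t} *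
      (Real.log (prob μ {ω | (X ω, Y ω, Z ω) = t}) + Real.log (prob μ {ω | Z ω = t.2.2})
        - Real.log (prob μ {ω | (X ω, Z ω) = (t.1, t.2.2)})
        - Real.log (prob μ {ω | (Y ω, Z ω) = t.2})) := by
  have hXZ : entropy μ (fun ω => (X ω, Z ω)) = -∑ t : α × β × γ,
      prob μ {ω | (X ω, Y ω, Z ω) = t} * Real.log (prob μ {ω | (X ω, Z ω) = (t.1, t.2.2)}) :=
    entropy_comp_eq μ (fun t : α × β × γ => (t.1, t.2.2)) (fun ω => (X ω, Y ω, Z ω))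
  have hYZ : entropy μ (fun ω => (Y ω, Z ω)) = -∑ t : α × β × γ,
      prob μ {ω | (X ω, Y ω, Z ω) = t} * Real.log (prob μ {ω | (Y ω, Z ω) = t.2}) :=
    entropy_comp_eq μ (Prod.snd : α × β × γ → β × γ) (fun ω => (X ω, Y ω, Z ω))
  have hZ : entropy μ Z = -∑ t : α × β × γ,
      prob μ {ω | (X ω, Y ω, Z ω) = t} * Real.log (prob μ {ω | Z ω = t.2.2}) :=
    entropy_comp_eq μ (fun t : α × β × γ => t.2.2) (fun ω => (X ω, Y ω, Z ω))
  simp only [condMutualInfo, condEntropy, mul_add, mul_sub, Finset.sum_add_distrib,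
    Finset.sum_sub_distrib]
  rw [hXZ, hYZ, hZ, entropy]
  ring

theorem condMutualInfo_nonneg (X : Ω → α) (Y : Ω → β) (Z : Ω → γ) :
    0 ≤ condMutualInfo μ X Y Z := by
  rw [condMutualInfo_eq_sum]
  set T : Ω → α × β × γ := fun ω => (X ω, Y ω, Z ω)
  set P : α × β × γ → ℝ := fun t => prob μ {ω | T ω = t}
  set pXZ : α × β × γ → ℝ := fun t => prob μ {ω | (X ω, Z ω) = (t.1, t.2.2)}
  set pYZ : α × β × γ → ℝ := fun t => prob μ {ω | (Y ω, Z ω) = t.2}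
  set pZ : α × β × γ → ℝ := fun t => prob μ {ω | Z ω = t.2.2}
  have hpos : ∀ t, 0 < P t → 0 < pXZ t ∧ 0 < pYZ t ∧ 0 < pZ t := fun t hP => by
    refine ⟨?_, ?_, ?_⟩ <;>
      exact hP.trans_le (prob_mono μ fun ω (hω : T ω = t) => by rw [← hω]; rfl)
  -- Gibbs' inequality against `Q = p(x,z) p(y,z) / p(z)`, a probability mass function on triples
  have hle : ∀ t, P t - pXZ t * pYZ t / pZ t ≤
      P t * (Real.log (P t) + Real.log (pZ t) - Real.log (pXZ t) - Real.log (pYZ t)) := by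
    intro t
    have hQ : 0 ≤ pXZ t * pYZ t / pZ t :=
      div_nonneg (mul_nonneg (prob_nonneg μ _) (prob_nonneg μ _)) (prob_nonneg μ _)
    refine (sub_le_mul_log_div (prob_nonneg μ _) hQ fun hP => ?_).trans_eq ?_
    · obtain ⟨h1, h2, h3⟩ := hpos t hP
      positivity
    rcases (prob_nonneg μ _ : 0 ≤ P t).eq_or_lt with h0 | hP
    · simp only [P, ← h0, zero_mul]
    obtain ⟨h1, h2, h3⟩ := hpos t hP
    rw [Real.log_div hP.ne' (by positivity), Real.log_div (by positivity) h3.ne',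
      Real.log_mul h1.ne' h2.ne']
    ring
  calc (0 : ℝ) = ∑ t, P t - ∑ t, pXZ t * pYZ t / pZ t := by
        rw [sum_prob_eq_one, sum_prob_mul_prob_div_prob, sub_self]
    _ ≤ _ := by
        rw [← Finset.sum_sub_distrib]
        exact Finset.sum_le_sum fun t _ => hle t

end ConditionalMutualInformation

section Identities

variable (μ : FinPMF Ω) {α β γ : Type} [Fintype α] [Fintype β] [Fintype γ]

theorem condMutualInfo_comp_eq_condEntropy (g : α → β) (X : Ω → α) (Z : Ω → γ) :
    condMutualInfo μ X (g ∘ X) Z = condEntropy μ (g ∘ X) Z := by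
  have h : entropy μ (fun ω => (X ω, (g (X ω), Z ω))) = entropy μ (fun ω => (X ω, Z ω)) :=
    entropy_eq_of_comp μ (fun p => (p.1, g p.1, p.2)) (fun p => (p.1, p.2.2)) rfl rfl
  simp only [condMutualInfo, condEntropy, Function.comp_apply, h]
  ring

theorem mutualInfo_comm (U : Ω → α) (V : Ω → β) : mutualInfo μ U V = mutualInfo μ V U := by
  rw [mutualInfo, mutualInfo, entropy_pair_comm]
  ring

theorem mutualInfo_nonneg (U : Ω → α) (V : Ω → β) : 0 ≤ mutualInfo μ U V := by
  have h := condMutualInfo_nonneg μ U V (fun _ => ())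
  have hU : entropy μ (fun ω => (U ω, ())) = entropy μ U :=
    entropy_eq_of_comp μ (fun a => (a, ())) Prod.fst rfl rfl
  have hV : entropy μ (fun ω => (V ω, ())) = entropy μ V :=
    entropy_eq_of_comp μ (fun b => (b, ())) Prod.fst rfl rfl
  have hUV : entropy μ (fun ω => (U ω, V ω, ())) = entropy μ (fun ω => (U ω, V ω)) :=
    entropy_eq_of_comp μ (fun p => (p.1, p.2, ())) (fun p => (p.1, p.2.1)) rfl rfl
  have hconst := entropy_nonneg μ (fun _ => ())
  simp only [condMutualInfo, condEntropy, hU, hV, hUV] at h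
  rw [mutualInfo]
  linarith

theorem mutualInfo_comp_le (W : Ω → α) (V : Ω → β) (g : β → γ) :
    mutualInfo μ W (g ∘ V) ≤ mutualInfo μ W V := by
  have h := condMutualInfo_nonneg μ W V (g ∘ V)
  have hWV : entropy μ (fun ω => (W ω, V ω, g (V ω))) = entropy μ (fun ω => (W ω, V ω)) :=
    entropy_eq_of_comp μ (fun p => (p.1, p.2, g p.2)) (fun p => (p.1, p.2.1)) rfl rfl
  have hV : entropy μ (fun ω => (V ω, g (V ω))) = entropy μ V :=
    entropy_eq_of_comp μ (fun b => (b, g b)) Prod.fst rfl rfl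
  simp only [condMutualInfo, condEntropy, Function.comp_def, hWV, hV] at h
  simp only [mutualInfo, Function.comp_def]
  linarith

theorem entropy_pair_pair_eq_of_condEntropy_eq_zero (W : Ω → α) {Y : Ω → β} {Z : Ω → γ}
    (h : condEntropy μ Y Z = 0) :
    entropy μ (fun ω => (W ω, Y ω, Z ω)) = entropy μ (fun ω => (W ω, Z ω)) := by
  have hsub := condMutualInfo_nonneg μ W Y Z
  have hmono : entropy μ (fun ω => (W ω, Z ω)) ≤ entropy μ (fun ω => (W ω, Y ω, Z ω)) :=
    entropy_le_of_comp μ (fun p => (p.1, p.2.2)) rfl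
  simp only [condMutualInfo, condEntropy] at hsub h
  linarith

theorem mutualInfo_eq_of_condEntropy_eq_zero (W : Ω → α) {Y : Ω → β} {Z : Ω → γ}
    (hYZ : condEntropy μ Y Z = 0) (hZY : condEntropy μ Z Y = 0) :
    mutualInfo μ W Z = mutualInfo μ W Y := by
  have hWYZ := entropy_pair_pair_eq_of_condEntropy_eq_zero μ W hYZ
  have hWZY := entropy_pair_pair_eq_of_condEntropy_eq_zero μ W hZY
  have hswap : entropy μ (fun ω => (W ω, Z ω, Y ω)) = entropy μ (fun ω => (W ω, Y ω, Z ω)) :=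
    entropy_eq_of_comp μ (fun p => (p.1, p.2.2, p.2.1)) (fun p => (p.1, p.2.2, p.2.1)) rfl rfl
  have hYZswap := entropy_pair_comm μ Y Z
  simp only [condEntropy] at hYZ hZY
  simp only [mutualInfo]
  linarith

theorem condEntropy_eq_zero_of_entropy_le {Y : Ω → β} {Z : Ω → γ} (h : condEntropy μ Y Z = 0)
    (hle : entropy μ Z ≤ entropy μ Y) : condEntropy μ Z Y = 0 := by
  have hnonneg := condEntropy_nonneg μ Z Y
  have hswap := entropy_pair_comm μ Y Z
  simp only [condEntropy] at h hnonneg ⊢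
  linarith

end Identities

theorem label_blindness_minimal_sufficient_general {α1 α2 β γ : Type}
    [Fintype α1] [Fintype α2] [Fintype β] [Fintype γ]
    (μ : FinPMF Ω) (X1 : Ω → α1) (X2 : Ω → α2) (f : α1 → β) (Z : Ω → γ)
    (hind : mutualInfo μ X1 X2 = 0)
    (hsuff : condMutualInfo μ (fun ω => (X1 ω, X2 ω)) (fun ω => f (X1 ω)) Z = 0)
    (hmin : ∀ (γ' : Type) [Fintype γ'] (Z' : Ω → γ'),
      condEntropy μ Z' (fun ω => (X1 ω, X2 ω)) = 0 →
      condMutualInfo μ (fun ω => (X1 ω, X2 ω)) (fun ω => f (X1 ω)) Z' = 0 →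
      entropy μ Z ≤ entropy μ Z') :
    mutualInfo μ X2 Z = 0 := by
  set X : Ω → α1 × α2 := fun ω => (X1 ω, X2 ω)
  set g : α1 × α2 → β := fun x => f x.1
  set Y : Ω → β := g ∘ X
  have hYZ : condEntropy μ Y Z = 0 :=
    (condMutualInfo_comp_eq_condEntropy μ g X Z).symm.trans hsuff
  have hZY : condEntropy μ Z Y = 0 := by
    refine condEntropy_eq_zero_of_entropy_le μ hYZ (hmin β Y ?_ ?_)
    · exact condEntropy_comp_self μ g X
    · exact (condMutualInfo_comp_eq_condEntropy μ g X Y).trans (condEntropy_comp_self μ id Y)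
  have hX2Y : mutualInfo μ X2 Y = 0 := by
    refine le_antisymm ?_ (mutualInfo_nonneg μ X2 Y)
    have h := mutualInfo_comp_le μ X2 X1 f
    rwa [mutualInfo_comm μ X2 X1, hind] at h
  rw [mutualInfo_eq_of_condEntropy_eq_zero μ X2 hYZ hZY, hX2Y]

/-- Label blindness in the minimal sufficient statistic: if `x = (x1,x2)` with `x1 ⟂ x2`,
`y = f(x1)`, and `z` is a deterministic sufficient representation of `x` for `y` that
minimizes `H(z)` among all such representations, then `I(x2;z) = 0`. -/
theorem label_blindness_minimal_sufficient {α1 α2 β γ : Type}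
    [Fintype α1] [Fintype α2] [Fintype β] [Fintype γ]
    (μ : FinPMF Ω) (X1 : Ω → α1) (X2 : Ω → α2) (f : α1 → β) (Z : Ω → γ)
    (hind : mutualInfo μ X1 X2 = 0)
    (hdet : condEntropy μ Z (fun ω => (X1 ω, X2 ω)) = 0)
    (hsuff : condMutualInfo μ (fun ω => (X1 ω, X2 ω)) (fun ω => f (X1 ω)) Z = 0)
    (hmin : ∀ (γ' : Type) [Fintype γ'] (Z' : Ω → γ'),
      condEntropy μ Z' (fun ω => (X1 ω, X2 ω)) = 0 →
      condMutualInfo μ (fun ω => (X1 ω, X2 ω)) (fun ω => f (X1 ω)) Z' = 0 →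
      entropy μ Z ≤ entropy μ Z') :
    mutualInfo μ X2 Z = 0 :=
  label_blindness_minimal_sufficient_general μ X1 X2 f Z hind hsuff hmin
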